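/- arXiv:1512.03288 — 7 statements merged into one kernel-verified Lean document; each statement's English description precedes it below -/
import Mathlib

section
/- Let ρ₀ : [0,1] → ℝ be continuous on [0,1], continuously differentiable on [0,1), positive on [0,1), with ρ₀(1)=0, and suppose there exist δ>0 and L>0 with lim_{s→1⁻} (1-s)^{-δ} ρ₀(s) = L. Define ε₀(s) = (∫_s^1 σ ρ₀(σ) dσ) / ((γ-1) ρ₀(s)) for γ>1. Then ε₀ extends continuously to [0,1] with ε₀(1)=0, ε₀ is positive on [0,1), and ε₀ has a one-sided derivative at 1 equal to -1/((γ-1)(1+δ)). -/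
open Filter Topology intervalIntegral
noncomputable section

/-!
Near `s = 1` the numerator `∫ₛ¹ σ ρ₀` and `(1 - s)^(1+δ)` both vanish, and the ratio of their
derivatives, `s ρ₀ s / ((1 + δ) (1 - s)^δ)`, tends to `L / (1 + δ)`; by L'Hôpital so does the
ratio of the functions. Dividing by `(γ - 1) (1 - s)^(-δ) ρ₀ s → (γ - 1) L` gives the slope of
`ε₀` at `1`, and continuity at `1` follows from this one-sided differentiability.
-/

open Set

theorem continuousOn_integral_left_Icc {F : ℝ → ℝ} {a b : ℝ} (hab : a ≤ b)
    (hF : ContinuousOn F (Icc a b)) :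
    ContinuousOn (fun s => ∫ σ in s..b, F σ) (Icc a b) := by
  rw [← uIcc_of_le hab] at hF ⊢
  exact continuousOn_primitive_interval_left hF.integrableOn_uIcc

theorem tendsto_integral_div_rpow_nhdsLT {F : ℝ → ℝ} {a b δ L : ℝ} (hab : a < b)
    (hδ : -1 < δ) (hF : ContinuousOn F (Icc a b))
    (hlim : Tendsto (fun s => (b - s) ^ (-δ) * F s) (𝓝[<] b) (𝓝 L)) :
    Tendsto (fun s => (∫ σ in s..b, F σ) / (b - s) ^ (1 + δ)) (𝓝[<] b)
      (𝓝 (L / (1 + δ))) := by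
  have hδ₁ : 0 < 1 + δ := by linarith
  have hIoo : Ioo a b ∈ 𝓝[<] b := Ioo_mem_nhdsLT hab
  have hnum_deriv : ∀ᶠ s in 𝓝[<] b, HasDerivAt (fun s => ∫ σ in s..b, F σ) (-F s) s := by
    filter_upwards [hIoo] with s hs
    exact integral_hasDerivAt_left
      ((hF.mono (Icc_subset_Icc_left hs.1.le)).intervalIntegrable_of_Icc hs.2.le)
      ((hF.mono Ioo_subset_Icc_self).stronglyMeasurableAtFilter isOpen_Ioo s hs)
      (hF.continuousAt (Icc_mem_nhds hs.1 hs.2))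
  have hden_deriv : ∀ᶠ s in 𝓝[<] b,
      HasDerivAt (fun s => (b - s) ^ (1 + δ)) (-1 * (1 + δ) * (b - s) ^ (1 + δ - 1)) s := by
    filter_upwards [self_mem_nhdsWithin] with s (hs : s < b)
    exact ((hasDerivAt_id s).const_sub b).rpow_const (Or.inl (sub_pos.2 hs).ne')
  have hden_deriv_ne : ∀ᶠ s in 𝓝[<] b, -1 * (1 + δ) * (b - s) ^ (1 + δ - 1) ≠ 0 := by
    filter_upwards [self_mem_nhdsWithin] with s (hs : s < b)
    have := Real.rpow_pos_of_pos (sub_pos.2 hs) (1 + δ - 1)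
    positivity
  have hnum_lim : Tendsto (fun s => ∫ σ in s..b, F σ) (𝓝[<] b) (𝓝 0) := by
    have h := (continuousOn_integral_left_Icc hab.le hF b (right_mem_Icc.2 hab.le)).tendsto
    rw [integral_same] at h
    rw [← nhdsWithin_Ico_eq_nhdsLT hab]
    exact h.mono_left (nhdsWithin_mono b Ico_subset_Icc_self)
  have hden_lim : Tendsto (fun s => (b - s) ^ (1 + δ)) (𝓝[<] b) (𝓝 0) := by
    have h : ContinuousAt (fun s => (b - s) ^ (1 + δ)) b :=
      ((continuousAt_const.sub continuousAt_id).rpow_const (Or.inr hδ₁.le))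
    simpa [Real.zero_rpow hδ₁.ne'] using h.tendsto.mono_left nhdsWithin_le_nhds
  refine HasDerivAt.lhopital_zero_nhdsLT hnum_deriv hden_deriv hden_deriv_ne hnum_lim hden_lim
    ((hlim.div_const (1 + δ)).congr' ?_)
  filter_upwards [self_mem_nhdsWithin] with s (hs : s < b)
  have hpow := Real.rpow_pos_of_pos (sub_pos.2 hs) δ
  rw [Real.rpow_neg (sub_pos.2 hs).le, add_sub_cancel_left]
  field_simp

section Profile

variable {ρ : ℝ → ℝ} {a b c δ L : ℝ}

theorem hasDerivWithinAt_integral_id_mul_div_Iio (hc : c ≠ 0) (hδ : -1 < δ) (hL : L ≠ 0)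
    (hab : a < b) (hρ : ContinuousOn ρ (Icc a b))
    (hlim : Tendsto (fun s => (b - s) ^ (-δ) * ρ s) (𝓝[<] b) (𝓝 L)) :
    HasDerivWithinAt (fun s => (∫ σ in s..b, σ * ρ σ) / (c * ρ s)) (-b / (c * (1 + δ)))
      (Iio b) b := by
  have hweighted : Tendsto (fun s => (b - s) ^ (-δ) * (s * ρ s)) (𝓝[<] b) (𝓝 (b * L)) := by
    refine ((tendsto_id.mono_left nhdsWithin_le_nhds).mul hlim).congr fun s => ?_
    simp only [id]
    ring
  have hnum : Tendsto (fun s => (∫ σ in s..b, σ * ρ σ) / (b - s) ^ (1 + δ)) (𝓝[<] b)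
      (𝓝 (b * L / (1 + δ))) :=
    tendsto_integral_div_rpow_nhdsLT hab hδ (continuousOn_id.mul hρ) hweighted
  have hden : Tendsto (fun s => c * ((b - s) ^ (-δ) * ρ s)) (𝓝[<] b) (𝓝 (c * L)) :=
    hlim.const_mul c
  have hquot := (hnum.div hden (mul_ne_zero hc hL)).neg
  have hval : -(b * L / (1 + δ) / (c * L)) = -b / (c * (1 + δ)) := by
    field_simp
  rw [hval] at hquot
  rw [hasDerivWithinAt_iff_tendsto_slope' self_notMem_Iio]
  refine hquot.congr' ?_
  filter_upwards [self_mem_nhdsWithin] with s (hs : s < b)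
  have hbs : 0 < b - s := sub_pos.2 hs
  have hpow := Real.rpow_pos_of_pos hbs δ
  rw [Pi.div_apply, slope_def_field, integral_same, zero_div, sub_zero, Real.rpow_neg hbs.le,
    Real.rpow_add hbs, Real.rpow_one]
  rcases eq_or_ne (ρ s) 0 with hρs | hρs
  · simp [hρs] -- both sides are `x / 0 = 0`
  · have : s - b ≠ 0 := by linarith
    field_simp
    ring

theorem continuousOn_integral_id_mul_div_Icc (hc : c ≠ 0) (hδ : -1 < δ) (hL : L ≠ 0)
    (hab : a < b) (hρ : ContinuousOn ρ (Icc a b)) (hρ_ne : ∀ s ∈ Ico a b, ρ s ≠ 0)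
    (hlim : Tendsto (fun s => (b - s) ^ (-δ) * ρ s) (𝓝[<] b) (𝓝 L)) :
    ContinuousOn (fun s => (∫ σ in s..b, σ * ρ σ) / (c * ρ s)) (Icc a b) := by
  intro s hs
  rcases hs.2.lt_or_eq with hsb | rfl
  · exact (continuousOn_integral_left_Icc hab.le (continuousOn_id.mul hρ) s hs).div
      ((hρ s hs).const_mul c) (mul_ne_zero hc (hρ_ne s ⟨hs.1, hsb⟩))
  · have h := (hasDerivWithinAt_integral_id_mul_div_Iio hc hδ hL hab hρ hlim).continuousWithinAt
    exact (continuousWithinAt_Iio_iff_Iic.1 h).mono Icc_subset_Iic_self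

theorem intervalIntegral_id_mul_pos {s : ℝ} (hs₀ : 0 ≤ s) (hsb : s < b)
    (hρ : ContinuousOn ρ (Icc s b)) (hρ_pos : ∀ σ ∈ Ioo s b, 0 < ρ σ) :
    0 < ∫ σ in s..b, σ * ρ σ :=
  intervalIntegral_pos_of_pos_on ((continuousOn_id.mul hρ).intervalIntegrable_of_Icc hsb.le)
    (fun σ hσ => mul_pos (hs₀.trans_lt hσ.1) (hρ_pos σ hσ)) hsb

end Profile

theorem stmt0_general (γ δ L : ℝ) (hγ : 1 < γ) (hδ : 0 < δ) (hL : 0 < L)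
    (ρ₀ : ℝ → ℝ)
    (hρcont : ContinuousOn ρ₀ (Set.Icc 0 1))
    (hρpos : ∀ s ∈ Set.Ico (0:ℝ) 1, 0 < ρ₀ s)
    (hlim : Tendsto (fun s => (1 - s) ^ (-δ) * ρ₀ s) (nhdsWithin 1 (Set.Iio 1)) (nhds L))
    (ε₀ : ℝ → ℝ)
    (hε : ∀ s, ε₀ s = (∫ σ in s..1, σ * ρ₀ σ) / ((γ - 1) * ρ₀ s)) :
    ε₀ 1 = 0 ∧ ContinuousOn ε₀ (Set.Icc 0 1) ∧
      (∀ s ∈ Set.Ico (0:ℝ) 1, 0 < ε₀ s) ∧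
      Tendsto (fun s => (ε₀ s - ε₀ 1) / (s - 1)) (nhdsWithin 1 (Set.Iio 1))
        (nhds (-1 / ((γ - 1) * (1 + δ)))) := by
  obtain rfl : ε₀ = fun s => (∫ σ in s..1, σ * ρ₀ σ) / ((γ - 1) * ρ₀ s) := funext hε
  have hγ₁ : 0 < γ - 1 := sub_pos.2 hγ
  have hδ₁ : -1 < δ := by linarith
  refine ⟨by simp, ?_, fun s hs => ?_, ?_⟩
  · exact continuousOn_integral_id_mul_div_Icc hγ₁.ne' hδ₁ hL.ne' zero_lt_one hρcont
      (fun s hs => (hρpos s hs).ne') hlim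
  · refine div_pos (intervalIntegral_id_mul_pos hs.1 hs.2 (hρcont.mono ?_) fun σ hσ => ?_)
      (mul_pos hγ₁ (hρpos s hs))
    · exact Icc_subset_Icc_left hs.1
    · exact hρpos σ ⟨hs.1.trans hσ.1.le, hσ.2⟩
  · have h := hasDerivWithinAt_integral_id_mul_div_Iio hγ₁.ne' hδ₁ hL.ne' zero_lt_one hρcont hlim
    exact ((hasDerivWithinAt_iff_tendsto_slope' self_notMem_Iio).1 h).congr fun s =>
      slope_def_field _ _ _

/-- properties of the internal energy profile ε₀ built from ρ₀. -/
theorem stmt0 (γ δ L : ℝ) (hγ : 1 < γ) (hδ : 0 < δ) (hL : 0 < L)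
    (ρ₀ : ℝ → ℝ)
    (hρcont : ContinuousOn ρ₀ (Set.Icc 0 1))
    (hρC1 : ContDiffOn ℝ 1 ρ₀ (Set.Ico 0 1))
    (hρpos : ∀ s ∈ Set.Ico (0:ℝ) 1, 0 < ρ₀ s)
    (hρ1 : ρ₀ 1 = 0)
    (hlim : Tendsto (fun s => (1 - s) ^ (-δ) * ρ₀ s) (nhdsWithin 1 (Set.Iio 1)) (nhds L))
    (ε₀ : ℝ → ℝ)
    (hε : ∀ s, ε₀ s = (∫ σ in s..1, σ * ρ₀ σ) / ((γ - 1) * ρ₀ s)) :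
    ε₀ 1 = 0 ∧ ContinuousOn ε₀ (Set.Icc 0 1) ∧
      (∀ s ∈ Set.Ico (0:ℝ) 1, 0 < ε₀ s) ∧
      Tendsto (fun s => (ε₀ s - ε₀ 1) / (s - 1)) (nhdsWithin 1 (Set.Iio 1))
        (nhds (-1 / ((γ - 1) * (1 + δ)))) :=
  stmt0_general γ δ L hγ hδ hL ρ₀ hρcont hρpos hlim ε₀ hε
end
end

section
/- If A : ℝ → GL⁺(3,ℝ) is a C² solution of A''(t) = (det A(t))^{1-γ} (A(t)⁻¹)ᵀ with γ > 1, then the energy E(t) = (1/2) tr(A'(t) A'(t)ᵀ) + (γ-1)⁻¹ (det A(t))^{1-γ} is constant in t. -/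
/-!
Along a solution, Jacobi's formula gives `(det A)' = det A · tr(A⁻¹ A')`, so the potential term
`(γ - 1)⁻¹ (det A)^(1-γ)` has derivative `-(det A)^(1-γ) tr(A⁻¹ A')`. The kinetic term
`½ tr(A' A'ᵀ)` has derivative `tr(A'' A'ᵀ) = (det A)^(1-γ) tr(A⁻ᵀ A'ᵀ)`, which is the same
quantity with the opposite sign because `tr(A⁻ᵀ A'ᵀ) = tr((A' A⁻¹)ᵀ) = tr(A⁻¹ A')`.
-/

open Matrix Filter Topology
noncomputable section
attribute [local instance] Matrix.normedAddCommGroup Matrix.normedSpace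

abbrev M3 := Matrix (Fin 3) (Fin 3) ℝ

section

variable {𝕜 : Type*} [NontriviallyNormedField 𝕜] {m n : Type*} [Fintype m] [Fintype n]

theorem HasDerivAt.matrix_trace_mul_transpose_self {M : 𝕜 → Matrix m n 𝕜} {M' : Matrix m n 𝕜}
    {t : 𝕜} (h : HasDerivAt M M' t) :
    HasDerivAt (fun s => trace (M s * (M s)ᵀ)) (2 * trace (M' * (M t)ᵀ)) t := by
  have hentry : ∀ i j, HasDerivAt (fun s => M s i j) (M' i j) t := fun i j =>
    hasDerivAt_pi.mp (hasDerivAt_pi.mp h i) j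
  simp only [trace, diag, mul_apply, transpose_apply, Finset.mul_sum]
  refine (HasDerivAt.fun_sum fun i _ => HasDerivAt.fun_sum fun j _ =>
    (hentry i j).fun_mul (hentry i j)).congr_deriv ?_
  exact Finset.sum_congr rfl fun i _ => Finset.sum_congr rfl fun j _ => by ring

variable [DecidableEq n]

theorem Matrix.det_updateRow_eq_vecMul_adjugate (A : Matrix n n 𝕜) (i : n) (b : n → 𝕜) :
    (A.updateRow i b).det = (b ᵥ* adjugate A) i := by
  rw [← cramer_transpose_apply, cramer_eq_adjugate_mulVec, ← adjugate_transpose,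
    mulVec_transpose]

theorem Matrix.adjugate_eq_det_smul_inv {A : Matrix n n 𝕜} (h : A.det ≠ 0) :
    adjugate A = A.det • A⁻¹ := by
  rw [inv_def, Ring.inverse_eq_inv', smul_smul, mul_inv_cancel₀ h, one_smul]

/-- Jacobi's formula. -/
theorem HasDerivAt.matrix_det {A : 𝕜 → Matrix n n 𝕜} {A' : Matrix n n 𝕜} {t : 𝕜}
    (h : HasDerivAt A A' t) :
    HasDerivAt (fun s => (A s).det) (trace (adjugate (A t) * A')) t := by
  let detRows : ContinuousMultilinearMap 𝕜 (fun _ : n => n → 𝕜) 𝕜 :=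
    { toMultilinearMap := (detRowAlternating : (n → 𝕜) [⋀^n]→ₗ[𝕜] 𝕜).toMultilinearMap
      cont := continuous_id.matrix_det }
  refine ((detRows.hasFDerivAt (A t)).comp_hasDerivAt t h).congr_deriv ?_
  refine (detRows.linearDeriv_apply (A t) A').trans ?_
  rw [trace_mul_comm]
  exact Finset.sum_congr rfl fun i _ => det_updateRow_eq_vecMul_adjugate (A t) i (A' i)

end

variable {n : Type*} [Fintype n] [DecidableEq n]

theorem HasDerivAt.matrix_det_rpow {A : ℝ → Matrix n n ℝ} {A' : Matrix n n ℝ} {t : ℝ}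
    (h : HasDerivAt A A' t) (hdet : 0 < (A t).det) (p : ℝ) :
    HasDerivAt (fun s => (A s).det ^ p) (p * (A t).det ^ p * trace ((A t)⁻¹ * A')) t := by
  refine (h.matrix_det.rpow_const (Or.inl hdet.ne')).congr_deriv ?_
  rw [adjugate_eq_det_smul_inv hdet.ne', smul_mul, trace_smul, smul_eq_mul,
    Real.rpow_sub_one hdet.ne']
  field_simp

def affineEnergy (γ : ℝ) (A : ℝ → Matrix n n ℝ) (t : ℝ) : ℝ :=
  (1 / 2) * trace (deriv A t * (deriv A t)ᵀ) + (γ - 1)⁻¹ * (A t).det ^ (1 - γ)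

theorem hasDerivAt_affineEnergy {γ : ℝ} (hγ : γ ≠ 1) {A : ℝ → Matrix n n ℝ} {t : ℝ}
    (hA : DifferentiableAt ℝ A t) (hdet : 0 < (A t).det)
    (hODE : HasDerivAt (deriv A) ((A t).det ^ (1 - γ) • ((A t)⁻¹)ᵀ) t) :
    HasDerivAt (affineEnergy γ A) 0 t := by
  set τ := trace ((A t)⁻¹ * deriv A t)
  set c := (A t).det ^ (1 - γ)
  have hkin : HasDerivAt (fun s => trace (deriv A s * (deriv A s)ᵀ)) (2 * (c * τ)) t := by
    refine hODE.matrix_trace_mul_transpose_self.congr_deriv ?_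
    rw [smul_mul, trace_smul, ← transpose_mul, trace_transpose, trace_mul_comm, smul_eq_mul]
  have hpot : HasDerivAt (fun s => (A s).det ^ (1 - γ)) ((1 - γ) * c * τ) t :=
    hA.hasDerivAt.matrix_det_rpow hdet (1 - γ)
  refine ((hkin.const_mul (1 / 2)).add (hpot.const_mul (γ - 1)⁻¹)).congr_deriv ?_
  field_simp [sub_ne_zero.mpr hγ]
  ring

theorem affineEnergy_eq_of_ode {γ : ℝ} (hγ : γ ≠ 1) {A : ℝ → Matrix n n ℝ}
    (hA : ContDiff ℝ 2 A) (hdet : ∀ t, 0 < (A t).det)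
    (hODE : ∀ t, deriv (deriv A) t = (A t).det ^ (1 - γ) • ((A t)⁻¹)ᵀ) (s t : ℝ) :
    affineEnergy γ A s = affineEnergy γ A t := by
  have hE : ∀ t, HasDerivAt (affineEnergy γ A) 0 t := fun t =>
    hasDerivAt_affineEnergy hγ (hA.differentiable (by norm_num) t) (hdet t)
      (hODE t ▸ (hA.differentiable_deriv_two t).hasDerivAt)
  exact is_const_of_deriv_eq_zero (fun t => (hE t).differentiableAt) (fun t => (hE t).deriv) s t

/-- conservation of energy for compressible affine motion. -/
theorem stmt3 (γ : ℝ) (hγ : 1 < γ) (A : ℝ → M3)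
    (hA : ContDiff ℝ 2 A)
    (hdet : ∀ t : ℝ, 0 < (A t).det)
    (hODE : ∀ t : ℝ, deriv (deriv A) t = ((A t).det ^ (1 - γ)) • ((A t)⁻¹)ᵀ) :
    ∀ t : ℝ,
      (1/2) * Matrix.trace (deriv A t * (deriv A t)ᵀ) + (γ - 1)⁻¹ * (A t).det ^ (1 - γ)
      = (1/2) * Matrix.trace (deriv A 0 * (deriv A 0)ᵀ) + (γ - 1)⁻¹ * (A 0).det ^ (1 - γ) :=
  fun t => affineEnergy_eq_of_ode hγ.ne' hA hdet hODE t 0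
end
end

section
/- If A : ℝ → GL⁺(3,ℝ) is a C² solution of A''(t) = (det A(t))^{1-γ} (A(t)⁻¹)ᵀ with γ > 1, and X(t) = (1/2) tr(A(t) A(t)ᵀ), E_K(t) = (1/2) tr(A'(t)A'(t)ᵀ), E_P(t) = (γ-1)⁻¹(det A(t))^{1-γ}, then X''(t) = 2 E_K(t) + 3(γ-1) E_P(t) for all t. -/
/-!
Since `(M, N) ↦ tr (M Nᵀ)` is a symmetric bilinear form, the product rule gives
`X' = tr (A' Aᵀ)` and `X'' = tr (A'' Aᵀ) + tr (A' A'ᵀ)`. The equation of motion turns the first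
term into `det(A)^(1-γ) tr (A⁻ᵀ Aᵀ) = 3 det(A)^(1-γ) = 3 (γ - 1) E_P`.
-/

open Matrix Filter Topology
noncomputable section
attribute [local instance] Matrix.normedAddCommGroup Matrix.normedSpace

section TraceMulTranspose

variable {m n : Type*} [Fintype m] [Fintype n]

theorem Matrix.trace_mul_transpose_eq_sum (M N : Matrix m n ℝ) :
    trace (M * Nᵀ) = ∑ i, ∑ j, M i j * N i j := by
  simp [trace, mul_apply]

theorem Matrix.trace_mul_transpose_comm (M N : Matrix m n ℝ) :
    trace (M * Nᵀ) = trace (N * Mᵀ) := by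
  rw [← trace_transpose, transpose_mul, transpose_transpose]

theorem Matrix.trace_inv_transpose_mul_transpose [DecidableEq n] {A : Matrix n n ℝ}
    (hA : IsUnit A.det) : trace (A⁻¹ᵀ * Aᵀ) = Fintype.card n := by
  rw [← transpose_mul, mul_nonsing_inv A hA, transpose_one, trace_one]

theorem HasDerivAt.trace_mul_transpose {f g : ℝ → Matrix m n ℝ} {f' g' : Matrix m n ℝ} {t : ℝ}
    (hf : HasDerivAt f f' t) (hg : HasDerivAt g g' t) :
    HasDerivAt (fun s => trace (f s * (g s)ᵀ)) (trace (f' * (g t)ᵀ) + trace (f t * g'ᵀ)) t := by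
  have entry {h : ℝ → Matrix m n ℝ} {h' : Matrix m n ℝ} (hh : HasDerivAt h h' t) (i : m) (j : n) :
      HasDerivAt (fun s => h s i j) (h' i j) t :=
    hasDerivAt_pi.mp (hasDerivAt_pi.mp hh i) j
  simp only [trace_mul_transpose_eq_sum, ← Finset.sum_add_distrib]
  exact HasDerivAt.fun_sum fun i _ => HasDerivAt.fun_sum fun j _ =>
    (entry hf i j).mul (entry hg i j)

theorem deriv_trace_mul_transpose {f g : ℝ → Matrix m n ℝ} {t : ℝ}
    (hf : DifferentiableAt ℝ f t) (hg : DifferentiableAt ℝ g t) :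
    deriv (fun s => trace (f s * (g s)ᵀ)) t
      = trace (deriv f t * (g t)ᵀ) + trace (f t * (deriv g t)ᵀ) :=
  (hf.hasDerivAt.trace_mul_transpose hg.hasDerivAt).deriv

end TraceMulTranspose

/-- the virial identity X'' = 2 E_K + 3(γ-1) E_P. -/
theorem stmt4 (γ : ℝ) (hγ : 1 < γ) (A : ℝ → M3)
    (hA : ContDiff ℝ 2 A)
    (hdet : ∀ t : ℝ, 0 < (A t).det)
    (hODE : ∀ t : ℝ, deriv (deriv A) t = ((A t).det ^ (1 - γ)) • ((A t)⁻¹)ᵀ) :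
    ∀ t : ℝ,
      deriv (deriv (fun s => (1/2) * Matrix.trace (A s * (A s)ᵀ))) t
        = 2 * ((1/2) * Matrix.trace (deriv A t * (deriv A t)ᵀ))
          + 3 * (γ - 1) * ((γ - 1)⁻¹ * (A t).det ^ (1 - γ)) := by
  obtain ⟨hA₁, -, hA₂⟩ := contDiff_succ_iff_deriv.mp (show ContDiff ℝ (1 + 1) A from hA)
  have hA' : Differentiable ℝ (deriv A) := hA₂.differentiable one_ne_zero
  have hX' : deriv (fun s => (1/2) * trace (A s * (A s)ᵀ))
      = fun s => trace (deriv A s * (A s)ᵀ) := by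
    funext s
    rw [deriv_const_mul _
        ((hA₁ s).hasDerivAt.trace_mul_transpose (hA₁ s).hasDerivAt).differentiableAt,
      deriv_trace_mul_transpose (hA₁ s) (hA₁ s), trace_mul_transpose_comm (A s) (deriv A s)]
    ring
  intro t
  rw [hX', deriv_trace_mul_transpose (hA' t) (hA₁ t), hODE, smul_mul, trace_smul,
    trace_inv_transpose_mul_transpose (hdet t).ne'.isUnit, Fintype.card_fin, smul_eq_mul]
  field_simp [sub_ne_zero.mpr hγ.ne']
  ring
end
end

section
/- Let γ > 1, p = 3 if 1 < γ ≤ 5/3 and p = 2/(γ-1) if γ > 5/3. If A : ℝ → GL⁺(3,ℝ) is a C² solution of A''(t) = (det A(t))^{1-γ}(A(t)⁻¹)ᵀ, then there exist constants such that 1 + |t|^p ≲ det A(t) ≲ 1 + |t|³ for all t ∈ ℝ. -/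
/-!
Write `δ = det A`, `h = δ ^ (1 - γ)`, `g = |A|² / 2` and `v = ⟨A, A'⟩ = g'` (Frobenius pairing).
Jacobi's formula `δ' = δ tr (A' A⁻¹)` and the equation give the conserved energy
`E = |A'|² / 2 + h / (γ - 1)` and the virial identity `v' = |A'|² + 3 h ≥ E min 2 (3 (γ - 1)) > 0`,
so `g` grows quadratically. As `h ≤ (γ - 1) E`, `δ` is bounded below; as `|A'|² ≤ 2 E`, the
entries of `A` grow linearly and `δ ≲ 1 + |t|³`. For the decay of `h`, Cauchy–Schwarz gives
`D = 4 E g - v² ≥ 4 g h / (γ - 1)`, while `D' = 2 v h (2 / (γ - 1) - 3)`; once `v ≥ 0` this makes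
`D / g ^ κ` nonincreasing for `κ = max 0 (1 - 3 (γ - 1) / 2)`, so
`h ≲ D / g ≲ g ^ (κ - 1) ≲ t ^ (2 (κ - 1))`, that is `δ ≳ t ^ p`. Reversing time handles `t → -∞`.
-/

open Matrix Filter Topology
noncomputable section
attribute [local instance] Matrix.normedAddCommGroup Matrix.normedSpace

theorem antitoneOn_mul_rpow_neg {D D' g g' : ℝ → ℝ} {κ a : ℝ}
    (hD : ∀ t, HasDerivAt D (D' t) t) (hg : ∀ t, HasDerivAt g (g' t) t) (hg₀ : ∀ t, 0 < g t)
    (hle : ∀ t, a ≤ t → D' t * g t ≤ κ * D t * g' t) :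
    AntitoneOn (fun t => D t * g t ^ (-κ)) (Set.Ici a) := by
  have hderiv : ∀ t, HasDerivAt (fun t => D t * g t ^ (-κ))
      (g t ^ (-κ - 1) * (D' t * g t - κ * D t * g' t)) t := fun t => by
    refine ((hD t).mul ((hg t).rpow_const (p := -κ) (Or.inl (hg₀ t).ne'))).congr_deriv ?_
    rw [Real.rpow_sub_one (hg₀ t).ne']
    field_simp [(hg₀ t).ne']
    ring
  refine antitoneOn_of_hasDerivWithinAt_nonpos (convex_Ici a)
    (fun t _ => (hderiv t).continuousAt.continuousWithinAt)
    (fun t _ => (hderiv t).hasDerivWithinAt) fun t ht => ?_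
  rw [interior_Ici] at ht
  exact mul_nonpos_of_nonneg_of_nonpos (Real.rpow_nonneg (hg₀ t).le _)
    (sub_nonpos.2 (hle t (le_of_lt ht)))

theorem quadratic_le_of_linear_le_deriv {f f' : ℝ → ℝ} {m t : ℝ}
    (hf : ∀ s, HasDerivAt f (f' s) s) (hf' : ∀ s, 0 ≤ s → f' 0 + m * s ≤ f' s) (ht : 0 ≤ t) :
    f 0 + f' 0 * t + m / 2 * t ^ 2 ≤ f t := by
  have hderiv : ∀ s, HasDerivAt (fun s => f s - f' 0 * s - m / 2 * s ^ 2)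
      (f' s - f' 0 - m * s) s := fun s => by
    refine (((hf s).sub ((hasDerivAt_id s).const_mul (f' 0))).sub
      ((hasDerivAt_pow 2 s).const_mul (m / 2))).congr_deriv ?_
    simp only [Nat.cast_ofNat]
    ring
  have hmono : MonotoneOn (fun s => f s - f' 0 * s - m / 2 * s ^ 2) (Set.Ici 0) :=
    monotoneOn_of_hasDerivWithinAt_nonneg (convex_Ici 0)
      (fun s _ => (hderiv s).continuousAt.continuousWithinAt)
      (fun s _ => (hderiv s).hasDerivWithinAt)
      fun s hs => by rw [interior_Ici] at hs; linarith [hf' s (le_of_lt hs)]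
  have := hmono (Set.mem_Ici.2 le_rfl) ht ht
  simp only [mul_zero, sub_zero, ne_eq, OfNat.ofNat_ne_zero, not_false_eq_true, zero_pow] at this
  linarith

theorem mul_rpow_le_rpow_neg_of_le_mul_rpow_neg {x C t a r : ℝ} (hx : 0 < x) (hC : 0 < C)
    (ht : 0 < t) (hr : 0 ≤ r) (h : x ≤ C * t ^ (-a)) :
    C ^ (-r⁻¹) * t ^ (a / r) ≤ x ^ (-r⁻¹) := by
  calc C ^ (-r⁻¹) * t ^ (a / r) = (C * t ^ (-a)) ^ (-r⁻¹) := by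
        rw [Real.mul_rpow hC.le (by positivity), ← Real.rpow_mul ht.le, neg_mul_neg, div_eq_mul_inv]
    _ ≤ x ^ (-r⁻¹) := Real.rpow_le_rpow_of_nonpos hx h (neg_nonpos.2 (inv_nonneg.2 hr))

theorem exists_pos_mul_one_add_abs_rpow_le {f : ℝ → ℝ} {p c₀ c : ℝ} (hp : 0 ≤ p) (hc₀ : 0 < c₀)
    (hc : 0 < c) (h₀ : ∀ t, c₀ ≤ f t)
    (hlarge : ∀ᶠ t in atTop, c * t ^ p ≤ f t ∧ c * t ^ p ≤ f (-t)) :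
    ∃ c' > 0, ∀ t, c' * (1 + |t| ^ p) ≤ f t := by
  obtain ⟨R, hR⟩ := (hlarge.and (eventually_ge_atTop 1)).exists_forall_of_atTop
  have hR1 : 1 ≤ R := (hR R le_rfl).2
  have hRp : 0 < 1 + R ^ p := by positivity
  refine ⟨min (c / 2) (c₀ / (1 + R ^ p)), by positivity, fun t => ?_⟩
  rcases le_or_gt |t| R with ht | ht
  · calc min (c / 2) (c₀ / (1 + R ^ p)) * (1 + |t| ^ p)
        ≤ c₀ / (1 + R ^ p) * (1 + R ^ p) := by
          gcongr
          exact min_le_right _ _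
      _ = c₀ := div_mul_cancel₀ _ hRp.ne'
      _ ≤ f t := h₀ t
  · obtain ⟨⟨hpos, hneg⟩, h1⟩ := hR |t| ht.le
    have hfabs : c * |t| ^ p ≤ f t := by
      rcases abs_choice t with h | h
      · rwa [h] at hpos ⊢
      · rw [h, neg_neg] at hneg
        rwa [h]
    calc min (c / 2) (c₀ / (1 + R ^ p)) * (1 + |t| ^ p)
        ≤ c / 2 * (|t| ^ p + |t| ^ p) := by
          gcongr
          · exact min_le_left _ _
          · exact Real.one_le_rpow h1 hp
      _ = c * |t| ^ p := by ring
      _ ≤ f t := hfabs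

/-- The scalar data of a solution in dimension `d`: `g = |A|² / 2`, `v = ⟨A, A'⟩`, `q = |A'|²`
and `h = (det A) ^ (1 - γ)`. -/
structure VirialSystem (γ d E : ℝ) (g v q h : ℝ → ℝ) : Prop where
  hasDerivAt_g : ∀ t, HasDerivAt g (v t) t
  hasDerivAt_v : ∀ t, HasDerivAt v (q t + d * h t) t
  energy : ∀ t, q t / 2 + h t / (γ - 1) = E
  q_nonneg : ∀ t, 0 ≤ q t
  h_pos : ∀ t, 0 < h t
  g_pos : ∀ t, 0 < g t
  sq_le : ∀ t, v t ^ 2 ≤ 2 * g t * q t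

namespace VirialSystem

variable {γ d E : ℝ} {g v q h : ℝ → ℝ}

theorem comp_neg (S : VirialSystem γ d E g v q h) :
    VirialSystem γ d E (fun t => g (-t)) (fun t => -v (-t)) (fun t => q (-t))
      (fun t => h (-t)) where
  hasDerivAt_g t := ((S.hasDerivAt_g (-t)).comp t (hasDerivAt_neg t)).congr_deriv (by ring)
  hasDerivAt_v t := ((S.hasDerivAt_v (-t)).comp t (hasDerivAt_neg t)).neg.congr_deriv (by ring)
  energy t := S.energy (-t)
  q_nonneg t := S.q_nonneg (-t)
  h_pos t := S.h_pos (-t)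
  g_pos t := S.g_pos (-t)
  sq_le t := by simpa using S.sq_le (-t)

theorem q_eq (S : VirialSystem γ d E g v q h) (t : ℝ) : q t = 2 * E - 2 * (h t / (γ - 1)) := by
  linarith [S.energy t]

theorem h_le (S : VirialSystem γ d E g v q h) (hγ : 1 < γ) (t : ℝ) : h t ≤ (γ - 1) * E := by
  rw [← div_le_iff₀' (by linarith)]
  linarith [S.energy t, S.q_nonneg t]

theorem E_pos (S : VirialSystem γ d E g v q h) (hγ : 1 < γ) : 0 < E := by
  have := div_pos (S.h_pos 0) (sub_pos.2 hγ)
  linarith [S.energy 0, S.q_nonneg 0]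

theorem q_le (S : VirialSystem γ d E g v q h) (hγ : 1 < γ) (t : ℝ) : q t ≤ 2 * E := by
  have := div_pos (S.h_pos t) (sub_pos.2 hγ)
  linarith [S.q_eq t]

theorem mul_min_le_q_add_mul_h (S : VirialSystem γ d E g v q h) (hγ : 1 < γ) (t : ℝ) :
    E * min 2 (d * (γ - 1)) ≤ q t + d * h t := by
  have hγ' : 0 < γ - 1 := by linarith
  have hu : h t / (γ - 1) ≤ E := (div_le_iff₀' hγ').2 (S.h_le hγ t)
  have hu0 : 0 ≤ h t / (γ - 1) := div_nonneg (S.h_pos t).le hγ'.le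
  have hE := S.E_pos hγ
  have hq : q t + d * h t = 2 * E + (d * (γ - 1) - 2) * (h t / (γ - 1)) := by
    rw [S.q_eq t]; field_simp; ring
  rw [hq]
  rcases le_total 2 (d * (γ - 1)) with h2 | h2
  · rw [min_eq_left h2]; nlinarith
  · rw [min_eq_right h2]; nlinarith

theorem eventually_growth (S : VirialSystem γ d E g v q h) (hγ : 1 < γ) (hd : 0 < d) :
    ∀ᶠ t in atTop, 0 ≤ v t ∧ E * min 2 (d * (γ - 1)) / 4 * t ^ 2 ≤ g t := by
  set m := E * min 2 (d * (γ - 1))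
  have hm : 0 < m := mul_pos (S.E_pos hγ) (lt_min two_pos (mul_pos hd (sub_pos.2 hγ)))
  have hlin : ∀ s, 0 ≤ s → v 0 + m * s ≤ v s := fun s hs => by
    have := mul_sub_le_image_sub_of_le_deriv (fun x => (S.hasDerivAt_v x).differentiableAt)
      (fun x => (S.hasDerivAt_v x).deriv ▸ S.mul_min_le_q_add_mul_h hγ x) hs
    linarith
  have hv : Tendsto (fun t => v 0 + m * t) atTop atTop :=
    tendsto_atTop_add_const_left _ _ (tendsto_id.const_mul_atTop hm)
  have hg : Tendsto (fun t => g 0 + t * (v 0 + m / 4 * t)) atTop atTop :=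
    tendsto_atTop_add_const_left _ _ (tendsto_id.atTop_mul_atTop₀
      (tendsto_atTop_add_const_left _ _ (tendsto_id.const_mul_atTop (by positivity))))
  filter_upwards [hv.eventually_ge_atTop 0, hg.eventually_ge_atTop 0, eventually_ge_atTop 0]
    with t hvt hgt ht
  have := quadratic_le_of_linear_le_deriv S.hasDerivAt_g hlin ht
  constructor <;> nlinarith [hlin t ht]

theorem le_four_E_mul_g_sub_sq (S : VirialSystem γ d E g v q h) (t : ℝ) :
    4 * g t * h t / (γ - 1) ≤ 4 * E * g t - v t ^ 2 := by
  have := S.sq_le t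
  rw [S.q_eq t] at this
  linear_combination this

theorem hasDerivAt_four_E_mul_g_sub_sq (S : VirialSystem γ d E g v q h) (t : ℝ) :
    HasDerivAt (fun t => 4 * E * g t - v t ^ 2) (2 * v t * h t * (2 / (γ - 1) - d)) t := by
  refine (((S.hasDerivAt_g t).const_mul (4 * E)).sub ((S.hasDerivAt_v t).pow 2)).congr_deriv ?_
  rw [S.q_eq t]
  simp only [Nat.cast_ofNat]
  ring

theorem h_le_mul_div (S : VirialSystem γ d E g v q h) (hγ : 1 < γ) (t : ℝ) :
    h t ≤ (γ - 1) / 4 * (4 * E * g t - v t ^ 2) / g t := by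
  rw [le_div_iff₀ (S.g_pos t)]
  have := S.le_four_E_mul_g_sub_sq t
  rw [div_le_iff₀ (sub_pos.2 hγ)] at this
  linarith

theorem antitoneOn_four_E_mul_g_sub_sq_mul_rpow (S : VirialSystem γ d E g v q h) (hγ : 1 < γ)
    {a : ℝ} (hv : ∀ t, a ≤ t → 0 ≤ v t) :
    AntitoneOn (fun t => (4 * E * g t - v t ^ 2) * g t ^ (-max 0 (1 - d * (γ - 1) / 2)))
      (Set.Ici a) := by
  refine antitoneOn_mul_rpow_neg S.hasDerivAt_four_E_mul_g_sub_sq S.hasDerivAt_g S.g_pos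
    fun t ht => ?_
  have := hv t ht
  have : 0 ≤ 4 * g t * h t / (γ - 1) := by
    have := S.g_pos t; have := S.h_pos t; have := sub_pos.2 hγ; positivity
  calc 2 * v t * h t * (2 / (γ - 1) - d) * g t
      = v t * (4 * g t * h t / (γ - 1)) * (1 - d * (γ - 1) / 2) := by
        field_simp [(sub_pos.2 hγ).ne']
        ring
    _ ≤ v t * (4 * g t * h t / (γ - 1)) * max 0 (1 - d * (γ - 1) / 2) := by
        gcongr; exact le_max_right _ _
    _ ≤ v t * (4 * E * g t - v t ^ 2) * max 0 (1 - d * (γ - 1) / 2) := by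
        gcongr; exact S.le_four_E_mul_g_sub_sq t
    _ = _ := by ring

theorem eventually_le_rpow (S : VirialSystem γ d E g v q h) (hγ : 1 < γ) (hd : 0 < d) :
    ∃ C > 0, ∀ᶠ t in atTop, h t ≤ C * t ^ (-min 2 (d * (γ - 1))) := by
  have hγ' : 0 < γ - 1 := sub_pos.2 hγ
  set D := fun t => 4 * E * g t - v t ^ 2
  set κ := max 0 (1 - d * (γ - 1) / 2)
  set m := E * min 2 (d * (γ - 1))
  have hm : 0 < m := mul_pos (S.E_pos hγ) (lt_min two_pos (mul_pos hd hγ'))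
  have hκ : κ - 1 ≤ 0 :=
    sub_nonpos.2 (max_le zero_le_one (by linarith [mul_pos hd hγ']))
  have hexp : -min 2 (d * (γ - 1)) = 2 * (κ - 1) := by
    rcases le_total 2 (d * (γ - 1)) with h2 | h2
    · rw [min_eq_left h2, show κ = 0 from max_eq_left (by linarith)]; ring
    · rw [min_eq_right h2, show κ = _ from max_eq_right (by linarith)]; ring
  obtain ⟨t₁, ht₁⟩ := (S.eventually_growth hγ hd).exists_forall_of_atTop
  have hanti := S.antitoneOn_four_E_mul_g_sub_sq_mul_rpow hγ fun t ht => (ht₁ t ht).1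
  set Ψ := D t₁ * g t₁ ^ (-κ)
  have hΨ : 0 < Ψ := mul_pos ((div_pos (mul_pos (mul_pos four_pos (S.g_pos t₁)) (S.h_pos t₁))
    hγ').trans_le (S.le_four_E_mul_g_sub_sq t₁)) (Real.rpow_pos_of_pos (S.g_pos t₁) _)
  refine ⟨(γ - 1) / 4 * Ψ * (m / 4) ^ (κ - 1), by positivity, ?_⟩
  filter_upwards [S.eventually_growth hγ hd, eventually_ge_atTop t₁, eventually_gt_atTop 0]
    with t ⟨_, hgt⟩ ht ht0
  have hg := S.g_pos t
  have hDΨ : D t ≤ Ψ * g t ^ κ := by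
    have := hanti (Set.mem_Ici.2 le_rfl) ht ht
    dsimp only at this
    rwa [Real.rpow_neg hg.le, ← div_eq_mul_inv, div_le_iff₀ (by positivity)] at this
  calc h t ≤ (γ - 1) / 4 * D t / g t := S.h_le_mul_div hγ t
    _ ≤ (γ - 1) / 4 * (Ψ * g t ^ κ) / g t := by gcongr
    _ = (γ - 1) / 4 * Ψ * g t ^ (κ - 1) := by rw [Real.rpow_sub_one hg.ne']; ring
    _ ≤ (γ - 1) / 4 * Ψ * (m / 4 * t ^ 2) ^ (κ - 1) :=
        mul_le_mul_of_nonneg_left (Real.rpow_le_rpow_of_nonpos (by positivity) hgt hκ)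
          (by positivity)
    _ = (γ - 1) / 4 * Ψ * (m / 4) ^ (κ - 1) * t ^ (-min 2 (d * (γ - 1))) := by
        rw [hexp, Real.mul_rpow (by positivity) (by positivity), ← Real.rpow_natCast,
          ← Real.rpow_mul ht0.le]
        push_cast
        ring

theorem exists_mul_one_add_abs_rpow_le (S : VirialSystem γ d E g v q h) (hγ : 1 < γ)
    (hd : 0 < d) :
    ∃ c > 0, ∀ t, c * (1 + |t| ^ (min 2 (d * (γ - 1)) / (γ - 1))) ≤ h t ^ (-(γ - 1)⁻¹) := by
  have hγ' : 0 < γ - 1 := sub_pos.2 hγ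
  obtain ⟨C₁, hC₁, h₁⟩ := S.eventually_le_rpow hγ hd
  obtain ⟨C₂, -, h₂⟩ := S.comp_neg.eventually_le_rpow hγ hd
  set C := max C₁ C₂
  have hC : 0 < C := lt_max_of_lt_left hC₁
  refine exists_pos_mul_one_add_abs_rpow_le (c := C ^ (-(γ - 1)⁻¹)) (by positivity)
    (Real.rpow_pos_of_pos (mul_pos hγ' (S.E_pos hγ)) _) (Real.rpow_pos_of_pos hC _)
    (fun t => Real.rpow_le_rpow_of_nonpos (S.h_pos t) (S.h_le hγ t) (by simp [hγ'.le])) ?_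
  filter_upwards [h₁, h₂, eventually_gt_atTop 0] with t h1 h2 ht
  have hmax : ∀ {C' x}, C' ≤ C → x ≤ C' * t ^ (-min 2 (d * (γ - 1))) →
      x ≤ C * t ^ (-min 2 (d * (γ - 1))) := fun hC' hx => hx.trans (by gcongr)
  exact ⟨mul_rpow_le_rpow_neg_of_le_mul_rpow_neg (S.h_pos t) hC ht hγ'.le
      (hmax (le_max_left _ _) h1),
    mul_rpow_le_rpow_neg_of_le_mul_rpow_neg (S.h_pos (-t)) hC ht hγ'.le
      (hmax (le_max_right _ _) h2)⟩

end VirialSystem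

theorem ContDiff.hasDerivAt_deriv {E : Type*} [NormedAddCommGroup E] [NormedSpace ℝ E]
    {f : ℝ → E} (hf : ContDiff ℝ 2 f) (t : ℝ) : HasDerivAt (deriv f) (deriv (deriv f) t) t := by
  have := hf.differentiable_iteratedDeriv 1 (by norm_num)
  rw [iteratedDeriv_one] at this
  exact (this t).hasDerivAt

theorem HasDerivAt.matrix_apply {m n : Type*} [Fintype m] [Fintype n] {A : ℝ → Matrix m n ℝ}
    {A' : Matrix m n ℝ} {t : ℝ} (hA : HasDerivAt A A' t) (i : m) (j : n) :
    HasDerivAt (fun s => A s i j) (A' i j) t :=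
  hasDerivAt_pi.mp (hasDerivAt_pi.mp hA i) j

namespace Matrix

variable {m n : Type*} [Fintype m] [Fintype n]

def frobeniusInner (X Y : Matrix m n ℝ) : ℝ := ∑ ij : m × n, X ij.1 ij.2 * Y ij.1 ij.2

theorem frobeniusInner_comm (X Y : Matrix m n ℝ) : frobeniusInner X Y = frobeniusInner Y X := by
  simp only [frobeniusInner, mul_comm]

theorem frobeniusInner_smul_right (c : ℝ) (X Y : Matrix m n ℝ) :
    frobeniusInner X (c • Y) = c * frobeniusInner X Y := by
  simp only [frobeniusInner, Finset.mul_sum, smul_apply, smul_eq_mul]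
  exact Finset.sum_congr rfl fun _ _ => by ring

theorem frobeniusInner_self_nonneg (X : Matrix m n ℝ) : 0 ≤ frobeniusInner X X :=
  Finset.sum_nonneg fun _ _ => mul_self_nonneg _

theorem frobeniusInner_self_pos {X : Matrix m n ℝ} (hX : X ≠ 0) : 0 < frobeniusInner X X := by
  obtain ⟨i, j, hij⟩ : ∃ i j, X i j ≠ 0 := by
    by_contra! h
    exact hX (ext h)
  exact Finset.sum_pos' (fun _ _ => mul_self_nonneg _)
    ⟨(i, j), Finset.mem_univ _, mul_self_pos.2 hij⟩

theorem sq_frobeniusInner_le (X Y : Matrix m n ℝ) :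
    frobeniusInner X Y ^ 2 ≤ frobeniusInner X X * frobeniusInner Y Y := by
  simpa only [frobeniusInner, sq] using Finset.sum_mul_sq_le_sq_mul_sq Finset.univ
    (fun ij : m × n => X ij.1 ij.2) (fun ij => Y ij.1 ij.2)

theorem frobeniusInner_transpose (X Y : Matrix n n ℝ) :
    frobeniusInner X Yᵀ = (X * Y).trace := by
  simp only [frobeniusInner, Fintype.sum_prod_type, trace, diag, mul_apply, transpose_apply]

theorem norm_le_sqrt_frobeniusInner_self (X : Matrix m n ℝ) :
    ‖X‖ ≤ √(frobeniusInner X X) := by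
  refine (norm_le_iff (Real.sqrt_nonneg _)).2 fun i j => ?_
  rw [Real.norm_eq_abs, ← Real.sqrt_sq_eq_abs, sq]
  exact Real.sqrt_le_sqrt (Finset.single_le_sum (f := fun ij : m × n => X ij.1 ij.2 * X ij.1 ij.2)
    (fun _ _ => mul_self_nonneg _) (Finset.mem_univ (i, j)))

theorem _root_.HasDerivAt.frobeniusInner {X Y : ℝ → Matrix m n ℝ} {X' Y' : Matrix m n ℝ} {t : ℝ}
    (hX : HasDerivAt X X' t) (hY : HasDerivAt Y Y' t) :
    HasDerivAt (fun s => Matrix.frobeniusInner (X s) (Y s))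
      (Matrix.frobeniusInner X' (Y t) + Matrix.frobeniusInner (X t) Y') t := by
  simp only [Matrix.frobeniusInner, ← Finset.sum_add_distrib]
  exact HasDerivAt.fun_sum fun ij _ => (hX.matrix_apply ij.1 ij.2).mul (hY.matrix_apply ij.1 ij.2)

variable [DecidableEq n]

theorem trace_adjugate_mul (A B : Matrix n n ℝ) :
    (A.adjugate * B).trace = ∑ k, (A.updateCol k fun i => B i k).det := by
  simp only [trace, diag, ← cramer_apply, cramer_eq_adjugate_mulVec]
  rfl

theorem det_updateCol_eq_sum (A : Matrix n n ℝ) (k : n) (b : n → ℝ) :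
    (A.updateCol k b).det = ∑ σ : Equiv.Perm n,
      (Equiv.Perm.sign σ : ℝ) * ((∏ i ∈ Finset.univ.erase k, A (σ i) i) * b (σ k)) := by
  rw [det_apply']
  refine Finset.sum_congr rfl fun σ _ => ?_
  rw [← Finset.prod_erase_mul _ _ (Finset.mem_univ k)]
  congr 2
  · exact Finset.prod_congr rfl fun i hi => by simp [updateCol_ne (Finset.ne_of_mem_erase hi)]
  · simp

theorem hasDerivAt_det {A : ℝ → Matrix n n ℝ} {A' : Matrix n n ℝ} {t : ℝ}
    (hA : HasDerivAt A A' t) :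
    HasDerivAt (fun s => (A s).det) ((A t).adjugate * A').trace t := by
  simp_rw [det_apply', trace_adjugate_mul, det_updateCol_eq_sum, Finset.sum_comm (γ := n),
    ← Finset.mul_sum]
  exact HasDerivAt.fun_sum fun σ _ =>
    (HasDerivAt.fun_finsetProd fun i _ => hA.matrix_apply (σ i) i).const_mul _

theorem hasDerivAt_det_of_det_ne_zero {A : ℝ → Matrix n n ℝ} {A' : Matrix n n ℝ} {t : ℝ}
    (hA : HasDerivAt A A' t) (hdet : (A t).det ≠ 0) :
    HasDerivAt (fun s => (A s).det) ((A t).det * (A' * (A t)⁻¹).trace) t := by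
  refine (hasDerivAt_det hA).congr_deriv ?_
  rw [trace_mul_comm, inv_def, Ring.inverse_eq_inv', Matrix.mul_smul, trace_smul, smul_eq_mul,
    mul_inv_cancel_left₀ hdet]

theorem exists_det_le_mul_one_add_abs_pow {A A' : ℝ → Matrix n n ℝ} {V : ℝ}
    (hA : ∀ t, HasDerivAt A (A' t) t) (hV : ∀ t, ‖A' t‖ ≤ V) :
    ∃ C > 0, ∀ t, (A t).det ≤ C * (1 + |t| ^ Fintype.card n) := by
  set N := Fintype.card n
  set M := ‖A 0‖ + V + 1
  have hV0 : 0 ≤ V := (norm_nonneg _).trans (hV 0)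
  have hM : 0 < M := by positivity
  refine ⟨N.factorial * M ^ N * 2 ^ (N - 1), by positivity, fun t => ?_⟩
  have hincr : ‖A t - A 0‖ ≤ V * ‖t - 0‖ :=
    Convex.norm_image_sub_le_of_norm_hasDerivWithin_le (fun x _ => (hA x).hasDerivWithinAt)
      (fun x _ => hV x) convex_univ trivial trivial
  rw [sub_zero, Real.norm_eq_abs] at hincr
  have hentry : ∀ i j, |A t i j| ≤ M * (1 + |t|) := fun i j =>
    calc |A t i j| ≤ ‖A t‖ := norm_entry_le_entrywise_sup_norm (A t)
      _ ≤ ‖A 0‖ + ‖A t - A 0‖ := norm_le_insert' _ _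
      _ ≤ M * (1 + |t|) := by nlinarith [norm_nonneg (A 0), abs_nonneg t]
  calc (A t).det ≤ |(A t).det| := le_abs_self _
    _ ≤ N.factorial • (M * (1 + |t|)) ^ N := det_le (abv := AbsoluteValue.abs) hentry
    _ = N.factorial * M ^ N * (1 + |t|) ^ N := by rw [nsmul_eq_mul, mul_pow, mul_assoc]
    _ ≤ N.factorial * M ^ N * (2 ^ (N - 1) * (1 + |t| ^ N)) := by
        gcongr
        simpa using add_pow_le zero_le_one (abs_nonneg t) N
    _ = _ := by ring

end Matrix

section Solution

variable {n : Type*} [Fintype n] [DecidableEq n] {γ : ℝ} {A : ℝ → Matrix n n ℝ}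

theorem virialSystem_of_solution [Nonempty n] (hγ : γ ≠ 1) (hA : ContDiff ℝ 2 A)
    (hdet : ∀ t, 0 < (A t).det)
    (hODE : ∀ t, deriv (deriv A) t = ((A t).det ^ (1 - γ)) • ((A t)⁻¹)ᵀ) :
    ∃ E, VirialSystem γ (Fintype.card n) E (fun t => frobeniusInner (A t) (A t) / 2)
      (fun t => frobeniusInner (A t) (deriv A t)) (fun t => frobeniusInner (deriv A t) (deriv A t))
      (fun t => (A t).det ^ (1 - γ)) := by
  have hA' (t : ℝ) : HasDerivAt A (deriv A t) t :=
    ((hA.differentiable (by norm_num)) t).hasDerivAt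
  have hA'' (t : ℝ) : HasDerivAt (deriv A) ((A t).det ^ (1 - γ) • ((A t)⁻¹)ᵀ) t :=
    hODE t ▸ hA.hasDerivAt_deriv t
  set h := fun t => (A t).det ^ (1 - γ)
  set τ := fun t => (deriv A t * (A t)⁻¹).trace
  have hdet' (t : ℝ) : HasDerivAt (fun s => (A s).det) ((A t).det * τ t) t :=
    hasDerivAt_det_of_det_ne_zero (hA' t) (hdet t).ne'
  have hh' (t : ℝ) : HasDerivAt h ((1 - γ) * h t * τ t) t := by
    refine ((hdet' t).rpow_const (Or.inl (hdet t).ne')).congr_deriv ?_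
    rw [Real.rpow_sub_one (hdet t).ne']
    field_simp [(hdet t).ne']
    ring
  have hq' (t : ℝ) : HasDerivAt (fun t => frobeniusInner (deriv A t) (deriv A t))
      (2 * h t * τ t) t := by
    refine ((hA'' t).frobeniusInner (hA'' t)).congr_deriv ?_
    rw [frobeniusInner_comm, ← two_mul, frobeniusInner_smul_right, frobeniusInner_transpose]
    ring
  have henergy (t : ℝ) : HasDerivAt
      (fun t => frobeniusInner (deriv A t) (deriv A t) / 2 + h t / (γ - 1)) 0 t := by
    refine (((hq' t).div_const 2).add ((hh' t).div_const (γ - 1))).congr_deriv ?_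
    field_simp
    ring
  refine ⟨frobeniusInner (deriv A 0) (deriv A 0) / 2 + h 0 / (γ - 1), ?_⟩
  exact {
    hasDerivAt_g := fun t => ((hA' t).frobeniusInner (hA' t)).div_const 2 |>.congr_deriv <| by
      rw [frobeniusInner_comm]; ring
    hasDerivAt_v := fun t => ((hA' t).frobeniusInner (hA'' t)).congr_deriv <| by
      rw [frobeniusInner_smul_right, frobeniusInner_transpose, mul_nonsing_inv _
        (isUnit_iff_ne_zero.2 (hdet t).ne'), trace_one]
      ring
    energy := fun t => is_const_of_deriv_eq_zero (fun s => (henergy s).differentiableAt)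
      (fun s => (henergy s).deriv) t 0
    q_nonneg := fun t => frobeniusInner_self_nonneg _
    h_pos := fun t => Real.rpow_pos_of_pos (hdet t) _
    g_pos := fun t => half_pos (frobeniusInner_self_pos fun h0 => by
      simpa [h0] using hdet t)
    sq_le := fun t => by linarith [sq_frobeniusInner_le (A t) (deriv A t)] }

end Solution

/-- growth of det A(t): 1 + |t|^p ≲ det A(t) ≲ 1 + |t|³,
with p = 3 for 1 < γ ≤ 5/3 and p = 2/(γ-1) for γ > 5/3. -/
theorem stmt6 (γ p : ℝ) (hγ : 1 < γ)
    (hp : p = if γ ≤ 5/3 then 3 else 2 / (γ - 1))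
    (A : ℝ → M3)
    (hA : ContDiff ℝ 2 A)
    (hdet : ∀ t : ℝ, 0 < (A t).det)
    (hODE : ∀ t : ℝ, deriv (deriv A) t = ((A t).det ^ (1 - γ)) • ((A t)⁻¹)ᵀ) :
    ∃ c C : ℝ, 0 < c ∧ 0 < C ∧ ∀ t : ℝ,
      c * (1 + |t| ^ p) ≤ (A t).det ∧ (A t).det ≤ C * (1 + |t| ^ 3) := by
  have hγ' : 0 < γ - 1 := sub_pos.2 hγ
  obtain ⟨E, S⟩ := virialSystem_of_solution hγ.ne' hA hdet hODE
  obtain ⟨c, hc, hlower⟩ := S.exists_mul_one_add_abs_rpow_le hγ (by simp)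
  obtain ⟨C, hC, hupper⟩ := exists_det_le_mul_one_add_abs_pow
    (fun t => ((hA.differentiable (by norm_num)) t).hasDerivAt)
    fun t => (norm_le_sqrt_frobeniusInner_self _).trans (Real.sqrt_le_sqrt (S.q_le hγ t))
  have hexp : min 2 ((Fintype.card (Fin 3) : ℝ) * (γ - 1)) / (γ - 1) = p := by
    rw [hp, Fintype.card_fin, Nat.cast_ofNat]
    split_ifs with h53
    · rw [min_eq_right (by linarith), mul_div_cancel_right₀ _ hγ'.ne']
    · rw [min_eq_left (by linarith)]
  refine ⟨c, C, hc, hC, fun t => ⟨?_, by simpa using hupper t⟩⟩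
  have hdet_eq : ((A t).det ^ (1 - γ)) ^ (-(γ - 1)⁻¹) = (A t).det := by
    rw [← inv_neg, neg_sub, Real.rpow_rpow_inv (hdet t).le (by linarith)]
  simpa only [hexp, hdet_eq] using hlower t
end
end

section
/- Let A₀, A₁ ∈ M₃(ℝ) with A_∞(t) = A₀ + tA₁, and suppose det A₁ = 0 but the coefficient of t² in det(A₀+tA₁) is nonzero (i.e. deg det A_∞ = 2). Then the cofactor matrix cof A_∞(t), as a matrix polynomial in t, has a nonzero t² coefficient; equivalently ‖cof A_∞(t)‖ ∼ t² for t ≫ 1. -/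
open Matrix Filter Topology
noncomputable section
attribute [local instance] Matrix.normedAddCommGroup Matrix.normedSpace

/-- The cofactor matrix: cof A = (adjugate A)ᵀ. -/
def cof (A : M3) : M3 := (A.adjugate)ᵀ

set_option maxHeartbeats 2000000 in
lemma adj_quad (A₀ A₁ : M3) (t : ℝ) :
    adjugate (A₀ + t • A₁) = adjugate A₀ + t • (adjugate (A₀+A₁) - adjugate A₀ - adjugate A₁) + t ^ 2 • adjugate A₁ := by
  rw [adjugate_fin_three, adjugate_fin_three, adjugate_fin_three, adjugate_fin_three]
  ext i j
  fin_cases i <;> fin_cases j <;>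
    simp [Matrix.add_apply, Matrix.smul_apply, Matrix.sub_apply] <;> ring

set_option maxHeartbeats 2000000 in
lemma det_diff (A₀ A₁ : M3) :
    det (A₀ + (2:ℝ) • A₁) - 2 * det (A₀ + A₁) + det A₀
      = 2 * trace (A₀ * adjugate A₁) + 6 * det A₁ := by
  rw [det_fin_three, det_fin_three, det_fin_three, det_fin_three, adjugate_fin_three,
    trace_fin_three]
  simp [Matrix.mul_apply, Matrix.add_apply, Matrix.smul_apply, Fin.sum_univ_succ]
  ring

lemma cof_quad (A₀ A₁ : M3) (t : ℝ) :
    cof (A₀ + t • A₁) = cof A₀ + t • (cof (A₀+A₁) - cof A₀ - cof A₁) + t ^ 2 • cof A₁ := by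
  simp only [cof, adj_quad A₀ A₁ t, transpose_add, transpose_smul, transpose_sub]

/-- if det A₁ = 0 but det(A₀+tA₁) has a nonzero t² coefficient,
then cof(A₀+tA₁) has a nonzero t² coefficient; equivalently ‖cof(A₀+tA₁)‖ ∼ t²
for large t. -/
theorem stmt11 (A₀ A₁ : M3) (h₁ : A₁.det = 0)
    (hdeg : ∃ β₀ β₁ β₂ : ℝ, β₂ ≠ 0 ∧
      ∀ t : ℝ, (A₀ + t • A₁).det = β₀ + β₁ * t + β₂ * t ^ 2) :
    (∃ C0 C1 C2 : M3, C2 ≠ 0 ∧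
      ∀ t : ℝ, cof (A₀ + t • A₁) = C0 + t • C1 + t ^ 2 • C2) ∧
    ∃ T c C : ℝ, 0 < c ∧ 0 < C ∧ 1 ≤ T ∧ ∀ t : ℝ, T ≤ t →
      c * t ^ 2 ≤ ‖cof (A₀ + t • A₁)‖ ∧ ‖cof (A₀ + t • A₁)‖ ≤ C * t ^ 2 := by
  obtain ⟨β₀, β₁, β₂, hβ₂, hp⟩ := hdeg
  set C0 := cof A₀ with hC0
  set C1 := cof (A₀ + A₁) - cof A₀ - cof A₁ with hC1
  set C2 := cof A₁ with hC2
  have hquad : ∀ t : ℝ, cof (A₀ + t • A₁) = C0 + t • C1 + t ^ 2 • C2 :=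
    fun t => cof_quad A₀ A₁ t
  -- C2 ≠ 0
  have hC2ne : C2 ≠ 0 := by
    intro h0
    have hadj : adjugate A₁ = 0 := by
      have : adjugate A₁ = (cof A₁)ᵀ := (transpose_transpose _).symm
      rw [this, ← hC2, h0, transpose_zero]
    have e0 := hp 0
    have e1 := hp 1
    have e2 := hp 2
    simp only [zero_smul, add_zero, one_smul] at e0 e1 e2
    have hd := det_diff A₀ A₁
    rw [hadj, Matrix.mul_zero, trace_zero, h₁] at hd
    rw [e2, e1, e0] at hd
    apply hβ₂
    nlinarith [hd]
  refine ⟨⟨C0, C1, C2, hC2ne, hquad⟩, ?_⟩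
  have hK2 : 0 < ‖C2‖ := norm_pos_iff.mpr hC2ne
  set K0 := ‖C0‖
  set K1 := ‖C1‖
  set K2 := ‖C2‖
  have hK0 : 0 ≤ K0 := norm_nonneg _
  have hK1 : 0 ≤ K1 := norm_nonneg _
  refine ⟨max 1 (2 * (K0 + K1) / K2), K2 / 2, K0 + K1 + K2, by positivity, by positivity,
    le_max_left _ _, ?_⟩
  intro t ht
  have ht1 : (1:ℝ) ≤ t := le_trans (le_max_left _ _) ht
  have ht0 : (0:ℝ) < t := lt_of_lt_of_le one_pos ht1
  have ht2 : 2 * (K0 + K1) ≤ t * K2 := by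
    have h' : 2 * (K0 + K1) / K2 ≤ t := le_trans (le_max_right _ _) ht
    rw [div_le_iff₀ hK2] at h'
    linarith
  rw [hquad t]
  have hn1 : ‖t • C1‖ = t * K1 := by
    rw [norm_smul, Real.norm_eq_abs, abs_of_pos ht0]
  have hn2 : ‖t ^ 2 • C2‖ = t ^ 2 * K2 := by
    rw [norm_smul, Real.norm_eq_abs, abs_of_pos (by positivity)]
  constructor
  · -- lower bound
    have key : ‖t ^ 2 • C2‖ ≤ ‖C0 + t • C1 + t ^ 2 • C2‖ + ‖C0 + t • C1‖ := by
      have h' := norm_sub_le (C0 + t • C1 + t ^ 2 • C2) (C0 + t • C1)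
      have heq : (C0 + t • C1 + t ^ 2 • C2) - (C0 + t • C1) = t ^ 2 • C2 := by abel
      rw [heq] at h'
      exact h'
    have hsub : ‖C0 + t • C1‖ ≤ K0 + t * K1 := by
      have := norm_add_le C0 (t • C1)
      rw [hn1] at this; exact this
    rw [hn2] at key
    nlinarith [key, hsub, mul_le_mul_of_nonneg_left ht2 (le_of_lt ht0)]
  · -- upper bound
    have h1 : ‖C0 + t • C1 + t ^ 2 • C2‖ ≤ ‖C0 + t • C1‖ + ‖t ^ 2 • C2‖ := norm_add_le _ _
    have h2 : ‖C0 + t • C1‖ ≤ K0 + ‖t • C1‖ := norm_add_le _ _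
    rw [hn1] at h2; rw [hn2] at h1
    nlinarith [h1, h2, sq_nonneg (t - 1)]
end
end

section
/- Let α, β : ℝ → ℝ be C² with α > 0, solving β'' + 2(α'/α)β' = 0 and (1+2α⁻⁶)(α'/α)' + (1−4α⁻⁶)(α'/α)² − (β')² = 0, with α(0)=1, β(0)=0. Then β'(t) = β'(0) α(t)⁻² for all t, and the quantity e(t) = (1+2α(t)⁻⁶)(α'(t))² + (β'(0))² α(t)⁻² is constant in t. -/
/-!
Writing `c = β'(0)`, the first equation says `(β' α²)' = α² (β'' + 2 (α'/α) β') = 0`, so `β' α²`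
is constant, equal to `c` since `α(0) = 1`. Substituting `β' = c α⁻²` and
`(α'/α)' = α''/α - (α'/α)²` turns the second equation into Newton's law
`(1 + 2α⁻⁶) α'' = 6 α'² α⁻⁷ + c² α⁻³`, and the derivative of `e` is `2α'` times the difference of
the two sides.
-/

/-- The energy `e(t)` of the reduced system, with `c = β'(0)`. -/
noncomputable def swirlEnergy (a : ℝ → ℝ) (c t : ℝ) : ℝ :=
  (1 + 2 / a t ^ 6) * deriv a t ^ 2 + c ^ 2 / a t ^ 2

section SwirlingFlow

variable {a u : ℝ → ℝ}

theorem mul_sq_eq_of_deriv_add_two_logDeriv_mul (ha : Differentiable ℝ a) (ha0 : ∀ t, a t ≠ 0)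
    (hu : Differentiable ℝ u) (h : ∀ t, deriv u t + 2 * (deriv a t / a t) * u t = 0) (t s : ℝ) :
    u t * a t ^ 2 = u s * a s ^ 2 := by
  have hderiv : ∀ t, HasDerivAt (fun t => u t * a t ^ 2) 0 t := by
    intro t
    refine ((hu t).hasDerivAt.fun_mul ((ha t).hasDerivAt.fun_pow 2)).congr_deriv ?_
    have := h t
    field_simp [ha0 t] at this ⊢
    linear_combination a t * this
  exact is_const_of_deriv_eq_zero (fun t => (hderiv t).differentiableAt)
    (fun t => (hderiv t).deriv) t s

theorem hasDerivAt_swirlEnergy {t : ℝ} (c : ℝ) (ha : DifferentiableAt ℝ a t)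
    (ha' : DifferentiableAt ℝ (deriv a) t) (ha0 : a t ≠ 0) :
    HasDerivAt (swirlEnergy a c) (2 * deriv a t * ((1 + 2 / a t ^ 6) * deriv (deriv a) t
      - 6 * deriv a t ^ 2 / a t ^ 7 - c ^ 2 / a t ^ 3)) t := by
  have hA := ha.hasDerivAt
  refine ((((hasDerivAt_const t 1).fun_add ((hasDerivAt_const t 2).fun_div (hA.fun_pow 6)
    (pow_ne_zero 6 ha0))).fun_mul (ha'.hasDerivAt.fun_pow 2)).fun_add
    ((hasDerivAt_const t (c ^ 2)).fun_div (hA.fun_pow 2) (pow_ne_zero 2 ha0))).congr_deriv ?_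
  field_simp
  ring

theorem newton_of_swirl_eq {c t : ℝ} (ha : DifferentiableAt ℝ a t)
    (ha' : DifferentiableAt ℝ (deriv a) t) (ha0 : a t ≠ 0)
    (h : (1 + 2 / a t ^ 6) * deriv (fun s => deriv a s / a s) t
      + (1 - 4 / a t ^ 6) * (deriv a t / a t) ^ 2 - (c / a t ^ 2) ^ 2 = 0) :
    (1 + 2 / a t ^ 6) * deriv (deriv a) t - 6 * deriv a t ^ 2 / a t ^ 7 - c ^ 2 / a t ^ 3 = 0 := by
  rw [(ha'.hasDerivAt.fun_div ha.hasDerivAt ha0).deriv] at h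
  field_simp at h ⊢
  linear_combination h

end SwirlingFlow

theorem stmt15_general (α β : ℝ → ℝ)
    (hα : ContDiff ℝ 2 α) (hβ : ContDiff ℝ 2 β)
    (hαpos : ∀ t : ℝ, 0 < α t)
    (hβeq : ∀ t : ℝ, deriv (deriv β) t + 2 * (deriv α t / α t) * deriv β t = 0)
    (hαeq : ∀ t : ℝ, (1 + 2 / α t ^ 6) * deriv (fun s => deriv α s / α s) t
      + (1 - 4 / α t ^ 6) * (deriv α t / α t) ^ 2 - (deriv β t) ^ 2 = 0)
    (hα0 : α 0 = 1) :
    (∀ t : ℝ, deriv β t = deriv β 0 / α t ^ 2) ∧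
    (∀ t : ℝ,
      (1 + 2 / α t ^ 6) * (deriv α t) ^ 2 + (deriv β 0) ^ 2 / α t ^ 2
        = (1 + 2 / α 0 ^ 6) * (deriv α 0) ^ 2 + (deriv β 0) ^ 2 / α 0 ^ 2) := by
  have hα0' : ∀ t, α t ≠ 0 := fun t => (hαpos t).ne'
  have hαd := hα.differentiable two_ne_zero
  have hα'd := hα.differentiable_deriv_two
  have hβ' : ∀ t, deriv β t = deriv β 0 / α t ^ 2 := fun t => by
    rw [eq_div_iff (pow_ne_zero 2 (hα0' t))]
    simpa [hα0] using mul_sq_eq_of_deriv_add_two_logDeriv_mul hαd hα0'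
      hβ.differentiable_deriv_two hβeq t 0
  refine ⟨hβ', fun t => ?_⟩
  have hE : ∀ t, HasDerivAt (swirlEnergy α (deriv β 0)) 0 t := fun t => by
    convert hasDerivAt_swirlEnergy (deriv β 0) (hαd t) (hα'd t) (hα0' t) using 1
    rw [newton_of_swirl_eq (hαd t) (hα'd t) (hα0' t) (hβ' t ▸ hαeq t), mul_zero]
  exact is_const_of_deriv_eq_zero (fun t => (hE t).differentiableAt) (fun t => (hE t).deriv) t 0

/-- for the reduced swirling-flow system, β'(t) = β'(0)/α(t)² and the
energy e(t) = (1+2α⁻⁶)(α')² + β'(0)²α⁻² is conserved. -/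
theorem stmt15 (α β : ℝ → ℝ)
    (hα : ContDiff ℝ 2 α) (hβ : ContDiff ℝ 2 β)
    (hαpos : ∀ t : ℝ, 0 < α t)
    (hβeq : ∀ t : ℝ, deriv (deriv β) t + 2 * (deriv α t / α t) * deriv β t = 0)
    (hαeq : ∀ t : ℝ, (1 + 2 / α t ^ 6) * deriv (fun s => deriv α s / α s) t
      + (1 - 4 / α t ^ 6) * (deriv α t / α t) ^ 2 - (deriv β t) ^ 2 = 0)
    (hα0 : α 0 = 1) (hβ0 : β 0 = 0) :
    (∀ t : ℝ, deriv β t = deriv β 0 / α t ^ 2) ∧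
    (∀ t : ℝ,
      (1 + 2 / α t ^ 6) * (deriv α t) ^ 2 + (deriv β 0) ^ 2 / α t ^ 2
        = (1 + 2 / α 0 ^ 6) * (deriv α 0) ^ 2 + (deriv β 0) ^ 2 / α 0 ^ 2) :=
  stmt15_general α β hα hβ hαpos hβeq hαeq hα0
end

section
/- Let M ∈ M₃(ℝ) be nilpotent (M³ = 0) and A₀ ∈ SL(3,ℝ). Then A(t) = (I + tM)A₀ satisfies det A(t) = 1 for all t ∈ ℝ, A''(t) = 0, and tr((A'(t)A(t)⁻¹)²) = 0; hence A(t) is a global solution of the incompressible affine equation A'' = Λ(A,A')A⁻ᵀ with Λ(A,A') = tr((A'A⁻¹)²)/tr(A⁻ᵀA⁻¹), and the corresponding 'pressure coefficient' Λ vanishes identically. -/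
open Matrix Filter Topology
noncomputable section
attribute [local instance] Matrix.normedAddCommGroup Matrix.normedSpace

/-- The coefficient Λ(A,A') = tr((A'A⁻¹)²)/tr(A⁻ᵀA⁻¹) for incompressible affine motion. -/
def Lam (A A' : M3) : ℝ :=
  Matrix.trace ((A' * A⁻¹) * (A' * A⁻¹)) / Matrix.trace ((A⁻¹)ᵀ * A⁻¹)

/-!
A nilpotent `M` has reversed characteristic polynomial `det (1 - X • M) = 1` over a reduced ring,
so `det (1 + t • M) = 1`. The curve is affine in `t`, hence `A'' = 0`, and
`A' A⁻¹ = M (1 + t • M)⁻¹` is nilpotent because `M` commutes with `(1 + t • M)⁻¹`; so the trace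
of its square, and with it `Λ`, vanishes, and the equation `A'' = Λ A⁻ᵀ` reads `0 = 0`.
-/

namespace Matrix

variable {n R : Type*} [Fintype n] [DecidableEq n] [CommRing R]

open Polynomial in
theorem det_one_sub_eq_eval_charpolyRev (N : Matrix n n R) :
    det (1 - N) = eval 1 N.charpolyRev := by
  rw [charpolyRev, ← coe_evalRingHom, RingHom.map_det, RingHom.mapMatrix_apply]
  congr 1
  ext i j
  simp [Matrix.one_apply, apply_ite (eval (1 : R))]

open Polynomial in
theorem charpolyRev_eq_one_of_isNilpotent [IsReduced R] {N : Matrix n n R}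
    (hN : IsNilpotent N) : N.charpolyRev = 1 := by
  have hcoeff := isUnit_iff_coeff_isUnit_isNilpotent.mp (isUnit_charpolyRev_of_isNilpotent hN)
  ext i
  rcases eq_or_ne i 0 with rfl | hi
  · rw [coeff_zero_eq_eval_zero, eval_charpolyRev, coeff_one_zero]
  · rw [(hcoeff.2 i hi).eq_zero, coeff_one, if_neg hi]

theorem det_one_add_of_isNilpotent [IsReduced R] {N : Matrix n n R} (hN : IsNilpotent N) :
    det (1 + N) = 1 := by
  rw [← sub_neg_eq_add, det_one_sub_eq_eval_charpolyRev,
    charpolyRev_eq_one_of_isNilpotent hN.neg, Polynomial.eval_one]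

theorem commute_inv_right {A B : Matrix n n R} (h : Commute A B) : Commute A B⁻¹ := by
  rw [nonsing_inv_eq_ringInverse]
  by_cases hB : IsUnit B
  · obtain ⟨u, rfl⟩ := hB
    rw [Ring.inverse_unit]
    exact h.units_inv_right
  · rw [Ring.inverse_non_unit _ hB]
    exact Commute.zero_right A

theorem trace_mul_self_eq_zero_of_isNilpotent [IsReduced R] {N : Matrix n n R}
    (hN : IsNilpotent N) : trace (N * N) = 0 :=
  (isNilpotent_trace_of_isNilpotent ((Commute.refl N).isNilpotent_mul_right hN)).eq_zero

theorem isNilpotent_mul_mul_inv_one_add_smul_mul {M A : Matrix n n R} (hM : IsNilpotent M)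
    (hA : IsUnit A.det) (t : R) : IsNilpotent (M * A * ((1 + t • M) * A)⁻¹) := by
  rw [mul_inv_rev, ← Matrix.mul_assoc, Matrix.mul_assoc M, mul_nonsing_inv A hA, Matrix.mul_one]
  exact (commute_inv_right ((Commute.one_right M).add_right ((Commute.refl M).smul_right t)))
    |>.isNilpotent_mul_right hM

theorem hasDerivAt_one_add_smul_mul (M A : Matrix n n ℝ) (s : ℝ) :
    HasDerivAt (fun s : ℝ => (1 + s • M) * A) (M * A) s := by
  have hline : (fun s : ℝ => (1 + s • M) * A) = fun s => A + s • (M * A) := by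
    ext1 u
    rw [Matrix.add_mul, Matrix.one_mul, Matrix.smul_mul]
  have h := ((hasDerivAt_id' s).smul_const (M * A)).const_add A
  rwa [one_smul, ← hline] at h

theorem deriv_one_add_smul_mul (M A : Matrix n n ℝ) :
    deriv (fun s : ℝ => (1 + s • M) * A) = fun _ => M * A :=
  funext fun s => (hasDerivAt_one_add_smul_mul M A s).deriv

end Matrix

/-- shear flows A(t) = (I + tM)A₀ with M nilpotent give global
solutions of incompressible affine motion with vanishing pressure coefficient Λ. -/
theorem stmt18 (M A₀ : M3) (hM : M ^ 3 = 0) (hA₀ : A₀.det = 1) :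
    ∀ t : ℝ,
      ((1 + t • M) * A₀).det = 1 ∧
      deriv (deriv (fun s : ℝ => (1 + s • M) * A₀)) t = 0 ∧
      Matrix.trace ((deriv (fun s : ℝ => (1 + s • M) * A₀) t * ((1 + t • M) * A₀)⁻¹) *
        (deriv (fun s : ℝ => (1 + s • M) * A₀) t * ((1 + t • M) * A₀)⁻¹)) = 0 ∧
      Lam ((1 + t • M) * A₀) (deriv (fun s : ℝ => (1 + s • M) * A₀) t) = 0 ∧
      deriv (deriv (fun s : ℝ => (1 + s • M) * A₀)) t
        = Lam ((1 + t • M) * A₀) (deriv (fun s : ℝ => (1 + s • M) * A₀) t) •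
            (((1 + t • M) * A₀)⁻¹)ᵀ := by
  intro t
  have hMnil : IsNilpotent M := ⟨3, hM⟩
  have hderiv := deriv_one_add_smul_mul M A₀
  have hacc : deriv (deriv (fun s : ℝ => (1 + s • M) * A₀)) t = 0 := by
    rw [hderiv]
    exact deriv_const t _
  have htrace : trace ((deriv (fun s : ℝ => (1 + s • M) * A₀) t * ((1 + t • M) * A₀)⁻¹) *
      (deriv (fun s : ℝ => (1 + s • M) * A₀) t * ((1 + t • M) * A₀)⁻¹)) = 0 := by
    rw [hderiv]
    exact trace_mul_self_eq_zero_of_isNilpotent <|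
      isNilpotent_mul_mul_inv_one_add_smul_mul hMnil (hA₀ ▸ isUnit_one) t
  have hLam : Lam ((1 + t • M) * A₀) (deriv (fun s : ℝ => (1 + s • M) * A₀) t) = 0 := by
    rw [Lam, htrace, zero_div]
  refine ⟨?_, hacc, htrace, hLam, ?_⟩
  · rw [det_mul, det_one_add_of_isNilpotent (hMnil.smul t), hA₀, one_mul]
  · rw [hLam, zero_smul, hacc]
end
end
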